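/- Let Q ∈ ℝ^{2K×2M}, λ > 0, S ∈ ℝ^{2M×L}, Λ ∈ ℝ^{2K×K}. Define the sequences Λ^(0) = Λ, Y^(0) = 0, M̃^(0) = 0, and for j ≥ 1: Λ^(j) = Λ^(j−1) − λY^(j−1) − Q M̃^(j−1), Y^(j) = (QSSᵀQᵀ + λI)⁻¹ Λ^(j), M̃^(j) = Qᵀ Y^(j). Then for every t ≥ 1, the partial sum Ŷ^(t) = Σ_{j=1}^t Y^(j) satisfies Ŷ^(t) = Ŷ^(t−1) + (QSSᵀQᵀ + λI)⁻¹(Λ − (QQᵀ + λI)Ŷ^(t−1)), i.e., the algorithm is a preconditioned Richardson iteration for the linear system (QQᵀ + λI)Y = Λ. -/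
import Mathlib


open Matrix Finset

theorem algorithm_is_preconditioned_richardson (K M L : ℕ)
    (Q : Matrix (Fin (2 * K)) (Fin (2 * M)) ℝ)
    (S : Matrix (Fin (2 * M)) (Fin L) ℝ)
    (lam : ℝ) (hlam : 0 < lam)
    (Λ : Matrix (Fin (2 * K)) (Fin K) ℝ)
    (Λseq Y : ℕ → Matrix (Fin (2 * K)) (Fin K) ℝ)
    (Mt : ℕ → Matrix (Fin (2 * M)) (Fin K) ℝ)
    (hΛ0 : Λseq 0 = Λ) (hY0 : Y 0 = 0) (hM0 : Mt 0 = 0)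
    (hΛ : ∀ j, Λseq (j + 1) = Λseq j - lam • Y j - Q * Mt j)
    (hY : ∀ j, Y (j + 1) =
      (Q * S * Sᵀ * Qᵀ + lam • (1 : Matrix (Fin (2 * K)) (Fin (2 * K)) ℝ))⁻¹ * Λseq (j + 1))
    (hM : ∀ j, Mt (j + 1) = Qᵀ * Y (j + 1)) :
    ∀ t : ℕ,
      (∑ j ∈ Finset.range (t + 1), Y (j + 1)) =
        (∑ j ∈ Finset.range t, Y (j + 1)) +
          (Q * S * Sᵀ * Qᵀ + lam • (1 : Matrix (Fin (2 * K)) (Fin (2 * K)) ℝ))⁻¹ *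
            (Λ - (Q * Qᵀ + lam • (1 : Matrix (Fin (2 * K)) (Fin (2 * K)) ℝ)) *
              (∑ j ∈ Finset.range t, Y (j + 1))) := by
  have key : ∀ t : ℕ, Λseq (t + 1) =
      Λ - (Q * Qᵀ + lam • (1 : Matrix (Fin (2 * K)) (Fin (2 * K)) ℝ)) *
        (∑ j ∈ Finset.range t, Y (j + 1)) := by
    intro t
    induction t with
    | zero => simp [hΛ, hΛ0, hY0, hM0]
    | succ n ih =>
      rw [hΛ, ih, hM, Finset.sum_range_succ]
      simp only [Matrix.mul_add, Matrix.add_mul, Matrix.smul_mul, Matrix.one_mul,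
        Matrix.mul_smul, ← Matrix.mul_assoc]
      abel
  intro t
  rw [Finset.sum_range_succ, hY, key]
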